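/- Let E be a finite set of vectors in ℝ^d with the partial orthogonality independence model. If M is a Markov boundary of v ∈ E and v lies in the span of E \ {v}, then the orthogonal projection of v onto span(M) equals v itself, i.e., v ∈ span(M). -/

import Mathlib

noncomputable def resid {E : Type*} [NormedAddCommGroup E] [InnerProductSpace ℝ E]
    [FiniteDimensional ℝ E] (C : Set E) (v : E) : E :=
  v - (Submodule.orthogonalProjectionOnto (Submodule.span ℝ C) v : E)

/-- `M` is a Markov blanket of `v` in `E` under partial orthogonality:
`M ⊆ E \ {v}` and the residuals of `v` and of every `u ∈ E \ ({v} ∪ M)`, after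
orthogonal projection onto the span of `M`, are orthogonal. -/
def MarkovBlanket {d : ℕ} [DecidableEq (EuclideanSpace ℝ (Fin d))]
    (E : Finset (EuclideanSpace ℝ (Fin d))) (v : EuclideanSpace ℝ (Fin d))
    (M : Finset (EuclideanSpace ℝ (Fin d))) : Prop :=
  M ⊆ E.erase v ∧ ∀ u ∈ E \ insert v M,
    inner ℝ (resid (M : Set (EuclideanSpace ℝ (Fin d))) v)
      (resid (M : Set (EuclideanSpace ℝ (Fin d))) u) = (0 : ℝ)

/-- A Markov boundary is a minimal Markov blanket. -/
def MarkovBoundary {d : ℕ} [DecidableEq (EuclideanSpace ℝ (Fin d))]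
    (E : Finset (EuclideanSpace ℝ (Fin d))) (v : EuclideanSpace ℝ (Fin d))
    (M : Finset (EuclideanSpace ℝ (Fin d))) : Prop :=
  MarkovBlanket E v M ∧ ∀ M' : Finset (EuclideanSpace ℝ (Fin d)),
    MarkovBlanket E v M' → ¬ M' ⊂ M

/-!
The residual `r = v - proj_M v` is orthogonal to `M` by construction, and to every other
`u ∈ E \ {v}` by the blanket property, because `⟪r, u⟫ = ⟪r, resid_M u⟫`. Hence `r` is
orthogonal to `span (E \ {v})`, which contains `v`, so `‖r‖² = ⟪r, v⟫ = 0`.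
-/

open Submodule RealInnerProductSpace

section Residual

variable {F : Type*} [NormedAddCommGroup F] [InnerProductSpace ℝ F] [FiniteDimensional ℝ F]

theorem resid_mem_orthogonal (C : Set F) (v : F) : resid C v ∈ (span ℝ C)ᗮ :=
  sub_starProjection_mem_orthogonal v

theorem resid_eq_zero_iff {C : Set F} {v : F} : resid C v = 0 ↔ v ∈ span ℝ C := by
  rw [resid, sub_eq_zero, eq_comm, ← starProjection_apply, starProjection_eq_self_iff]

theorem inner_resid_resid (C : Set F) (v u : F) :
    ⟪resid C v, resid C u⟫ = ⟪resid C v, u⟫ := by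
  have hproj : ⟪resid C v, (span ℝ C).starProjection u⟫ = 0 :=
    inner_left_of_mem_orthogonal (starProjection_apply_mem _ u) (resid_mem_orthogonal C v)
  change ⟪resid C v, u - (span ℝ C).starProjection u⟫ = _
  rw [inner_sub_right, hproj, sub_zero]

theorem resid_eq_zero_of_inner_eq_zero_of_mem_span {C S : Set F} {v : F}
    (horth : ∀ u ∈ S, ⟪resid C v, u⟫ = 0) (hv : v ∈ span ℝ S) : resid C v = 0 := by
  have hspan : span ℝ S ≤ (ℝ ∙ resid C v)ᗮ :=
    span_le.mpr fun u hu ↦ mem_orthogonal_singleton_iff_inner_right.mpr (horth u hu)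
  have hrv : ⟪resid C v, v⟫ = 0 := mem_orthogonal_singleton_iff_inner_right.mp (hspan hv)
  rw [← inner_resid_resid] at hrv
  exact inner_self_eq_zero.mp hrv

end Residual

theorem MarkovBlanket.inner_resid_eq_zero {d : ℕ} [DecidableEq (EuclideanSpace ℝ (Fin d))]
    {E M : Finset (EuclideanSpace ℝ (Fin d))} {v u : EuclideanSpace ℝ (Fin d)}
    (hM : MarkovBlanket E v M) (hu : u ∈ E.erase v) :
    ⟪resid (M : Set (EuclideanSpace ℝ (Fin d))) v, u⟫ = 0 := by
  by_cases huM : u ∈ M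
  · exact inner_left_of_mem_orthogonal (subset_span huM) (resid_mem_orthogonal _ v)
  · have hu' : u ∈ E \ insert v M := by
      rw [Finset.mem_erase] at hu
      simp [hu.2, hu.1, huM]
    rw [← inner_resid_resid]
    exact hM.2 u hu'

theorem markov_boundary_projection_eq_self_general {d : ℕ}
    [DecidableEq (EuclideanSpace ℝ (Fin d))]
    (E : Finset (EuclideanSpace ℝ (Fin d))) (v : EuclideanSpace ℝ (Fin d))
    (M : Finset (EuclideanSpace ℝ (Fin d))) (hM : MarkovBoundary E v M)
    (hspan : v ∈ Submodule.span ℝ ((E.erase v : Finset (EuclideanSpace ℝ (Fin d))) :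
      Set (EuclideanSpace ℝ (Fin d)))) :
    (Submodule.orthogonalProjectionOnto (Submodule.span ℝ (M : Set (EuclideanSpace ℝ (Fin d)))) v
      : EuclideanSpace ℝ (Fin d)) = v
    ∧ v ∈ Submodule.span ℝ (M : Set (EuclideanSpace ℝ (Fin d))) := by
  have hres : resid (M : Set (EuclideanSpace ℝ (Fin d))) v = 0 :=
    resid_eq_zero_of_inner_eq_zero_of_mem_span (fun _ hu ↦ hM.1.inner_resid_eq_zero hu) hspan
  have hmem := resid_eq_zero_iff.mp hres
  exact ⟨starProjection_eq_self_iff.mpr hmem, hmem⟩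

/-- If  lies in the span of the other embeddings, the projection of  onto the span
of any of its Markov boundaries equals  itself. -/
theorem markov_boundary_projection_eq_self {d : ℕ}
    [DecidableEq (EuclideanSpace ℝ (Fin d))]
    (E : Finset (EuclideanSpace ℝ (Fin d))) (v : EuclideanSpace ℝ (Fin d)) (hv : v ∈ E)
    (M : Finset (EuclideanSpace ℝ (Fin d))) (hM : MarkovBoundary E v M)
    (hspan : v ∈ Submodule.span ℝ ((E.erase v : Finset (EuclideanSpace ℝ (Fin d))) :
      Set (EuclideanSpace ℝ (Fin d)))) :
    (Submodule.orthogonalProjectionOnto (Submodule.span ℝ (M : Set (EuclideanSpace ℝ (Fin d)))) v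
      : EuclideanSpace ℝ (Fin d)) = v
    ∧ v ∈ Submodule.span ℝ (M : Set (EuclideanSpace ℝ (Fin d))) :=
  markov_boundary_projection_eq_self_general E v M hM hspan
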